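/- Let q be an odd prime, u_q(x) = Φ_q(x)² − q·x^{q−1}, s_q(x) = x^q − 1, t_q(x) = x + ⋯ + x^{q−1}, and let R_q(y) = Res_x(s_q(x) − y·t_q(x), u_q(x)) ∈ ℤ[y]. Then R_q is an even polynomial of degree 2q − 2 with leading coefficient −(q−1)^{q−2} and constant coefficient (q−1)·q^q. -/

import Mathlib

/-!
Since `u_q` is monic of degree `2q - 2`, `R_q(y) = ∏ (s_q(z) - y t_q(z))` over the roots `z` of
`u_q`; defining `R_q` as a resultant over `ℤ[y]` makes its integrality automatic. Its leading
coefficient `∏ (-t_q(z))` and constant term `∏ s_q(z)` are computed by exchanging the roles of the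
two polynomials: the roots of `t_q = x Φ_{q-1}` and of `s_q = (x - 1) Φ_q` are `0` and roots of
unity, at which `u_q` is easy to evaluate. Evenness comes from reciprocity: the roots of `u_q`
are stable under `z ↦ 1/z`, and `z^q s_q(1/z) = -s_q(z)`, `z^q t_q(1/z) = t_q(z)` turn the
factor of `R_q(y)` at `1/z` into `-z^{-q}` times the factor of `R_q(-y)` at `z`.
-/

open Polynomial

namespace Polynomial

theorem prod_roots_eval_comm {K : Type*} [Field K] {f g : K[X]} (hf : f.Monic) (hg : g.Monic)
    (hfs : f.Splits) (hgs : g.Splits) :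
    (f.roots.map g.eval).prod = (-1) ^ (f.natDegree * g.natDegree) * (g.roots.map f.eval).prod := by
  have hfg := resultant_eq_prod_eval f g g.natDegree le_rfl hfs
  have hgf := resultant_eq_prod_eval g f f.natDegree le_rfl hgs
  rw [hf.leadingCoeff, one_pow, one_mul] at hfg
  rw [hg.leadingCoeff, one_pow, one_mul] at hgf
  rw [← hfg, ← hgf, resultant_comm]

theorem roots_map_inv_of_reciprocal {K : Type*} [Field K] [Infinite K] {p : K[X]} (hm : p.Monic)
    (hs : p.Splits) (h0 : p.eval 0 = 1)
    (hrec : ∀ w ≠ 0, w ^ p.natDegree * p.eval w⁻¹ = p.eval w) :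
    p.roots.map (·⁻¹) = p.roots := by
  have hprod : (p.roots.map Neg.neg).prod = 1 := by
    rw [Multiset.prod_map_neg, ← hs.natDegree_eq_card_roots,
      ← hs.coeff_zero_eq_prod_roots_of_monic hm, coeff_zero_eq_eval_zero, h0]
  have hne : ∀ z ∈ p.roots, z ≠ 0 := by
    rintro z hz rfl
    simpa [h0] using (mem_roots hm.ne_zero).mp hz
  suffices h : (p.roots.map fun z => X - C z⁻¹).prod = p by
    rw [← roots_multiset_prod_X_sub_C (p.roots.map (·⁻¹)), Multiset.map_map]
    exact congrArg roots h
  refine eq_of_infinite_eval_eq _ _ (Set.Infinite.mono (s := {0}ᶜ) (fun w hw => ?_)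
    (Set.finite_singleton 0).infinite_compl)
  have hw : w ≠ 0 := hw
  calc eval w (p.roots.map fun z => X - C z⁻¹).prod
      = (p.roots.map Neg.neg).prod * (p.roots.map fun z => w - z⁻¹).prod := by
        rw [hprod, one_mul, eval_multiset_prod, Multiset.map_map]
        simp
    _ = (p.roots.map fun z => w * (w⁻¹ - z)).prod := by
        rw [← Multiset.prod_map_mul]
        refine congrArg _ (Multiset.map_congr rfl fun z hz => ?_)
        field_simp [hne z hz, hw]
        ring
    _ = w ^ p.natDegree * p.eval w⁻¹ := by
        rw [Multiset.prod_map_mul, Multiset.map_const', Multiset.prod_replicate,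
          hs.natDegree_eq_card_roots]
        conv_rhs => rw [hs.eq_prod_roots_of_monic hm]
        simp [eval_multiset_prod, Multiset.map_map]
    _ = p.eval w := hrec w hw

theorem coeff_comp_neg_X {R : Type*} [CommRing R] (p : R[X]) (n : ℕ) :
    (p.comp (-X)).coeff n = (-1) ^ n * p.coeff n := by
  induction p using Polynomial.induction_on' with
  | add p q hp hq => simp [add_comp, hp, hq, mul_add]
  | monomial k a =>
    rw [← C_mul_X_pow_eq_monomial, mul_comp, C_comp, X_pow_comp, neg_pow,
      show ((-1 : R[X])) ^ k = C ((-1) ^ k) by simp, ← mul_assoc, ← C_mul, coeff_C_mul_X_pow,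
      coeff_C_mul_X_pow]
    split_ifs with h
    · rw [h, mul_comm]
    · rw [mul_zero]

theorem coeff_eq_zero_of_odd_of_eval_neg {K : Type*} [Field K] [CharZero K] {p : K[X]}
    (hp : ∀ y, p.eval (-y) = p.eval y) {n : ℕ} (hn : Odd n) : p.coeff n = 0 := by
  have hcomp : p.comp (-X) = p := Polynomial.funext fun y => by simp [eval_comp, hp]
  have h := coeff_comp_neg_X p n
  rw [hcomp, hn.neg_one_pow, neg_one_mul] at h
  exact CharZero.neg_eq_self_iff.mp h.symm

theorem natDegree_C_sub_C_mul_X_le {R : Type*} [CommRing R] (a b : R) :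
    (C b - C a * X).natDegree ≤ 1 :=
  (natDegree_sub_le _ _).trans (max_le (by simp) ((natDegree_C_mul_le _ _).trans natDegree_X_le))

section LinearFactors

variable {R ι : Type*} [CommRing R] (m : Multiset ι) (a b : ι → R)

theorem natDegree_prod_C_sub_C_mul_X_le :
    (m.map fun i => C (b i) - C (a i) * X).prod.natDegree ≤ Multiset.card m := by
  refine (natDegree_multiset_prod_le _).trans ?_
  rw [Multiset.map_map]
  refine (Multiset.sum_map_le_sum_map _ (fun _ => 1) fun i _ => ?_).trans (by simp)
  exact natDegree_C_sub_C_mul_X_le _ _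

theorem coeff_card_prod_C_sub_C_mul_X :
    (m.map fun i => C (b i) - C (a i) * X).prod.coeff (Multiset.card m) =
      (-1) ^ Multiset.card m * (m.map a).prod := by
  have h := coeff_multiset_prod_of_natDegree_le (m.map fun i => C (b i) - C (a i) * X) 1 (by
    simp only [Multiset.mem_map]
    rintro _ ⟨i, -, rfl⟩
    exact natDegree_C_sub_C_mul_X_le _ _)
  rw [Multiset.card_map, mul_one] at h
  have hcoeff : ((coeff · 1) ∘ fun i => C (b i) - C (a i) * X) = Neg.neg ∘ a := by
    ext i; simp [coeff_C]
  rw [h, Multiset.map_map, hcoeff, ← Multiset.map_map, Multiset.prod_map_neg, Multiset.card_map]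

end LinearFactors

theorem natDegree_geom_sum_X {R : Type*} [CommRing R] [Nontrivial R] {n : ℕ} (hn : n ≠ 0) :
    (∑ i ∈ Finset.range n, (X : R[X]) ^ i).natDegree = n - 1 := by
  have h := (monic_geom_sum_X (R := R) hn).natDegree_mul (monic_X_sub_C 1)
  rw [C_1, geom_sum_mul, ← C_1, natDegree_X_pow_sub_C, natDegree_X_sub_C] at h
  omega

theorem pow_mul_geom_sum_inv {K : Type*} [Field K] {z : K} (hz : z ≠ 0) (n : ℕ) :
    z ^ n * ∑ i ∈ Finset.range (n + 1), z⁻¹ ^ i = ∑ i ∈ Finset.range (n + 1), z ^ i := by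
  rw [Finset.mul_sum, ← Finset.sum_range_reflect]
  refine Finset.sum_congr rfl fun i hi => ?_
  have hi : i ≤ n := Nat.lt_succ_iff.mp (Finset.mem_range.mp hi)
  rw [inv_pow, ← pow_sub₀ z hz (by omega), Nat.add_sub_cancel, Nat.sub_sub_self hi]

theorem prod_roots_geom_sum_X {K : Type*} [Field K] [IsAlgClosed K] {n : ℕ} (hn : n ≠ 0) :
    (∑ i ∈ Finset.range n, (X : K[X]) ^ i).roots.prod = (-1) ^ (n - 1) := by
  have h := (IsAlgClosed.splits _).coeff_zero_eq_prod_roots_of_monic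
    (monic_geom_sum_X (R := K) hn)
  have h0 : (∑ i ∈ Finset.range n, (X : K[X]) ^ i).eval 0 = 1 := by
    simp [eval_finsetSum, zero_geom_sum, hn]
  have hsq : ((-1 : K) ^ (n - 1)) ^ 2 = 1 := by rw [← pow_mul, pow_mul', neg_one_sq, one_pow]
  rw [coeff_zero_eq_eval_zero, natDegree_geom_sum_X hn, h0] at h
  linear_combination (-(-1 : K) ^ (n - 1)) * h -
    (∑ i ∈ Finset.range n, (X : K[X]) ^ i).roots.prod * hsq

end Polynomial

namespace WronskianResultant

section Ring

variable (R : Type*) [CommRing R] (q : ℕ)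

noncomputable def uPoly : R[X] := (∑ i ∈ Finset.range q, X ^ i) ^ 2 - C (q : R) * X ^ (q - 1)

noncomputable def sPoly : R[X] := X ^ q - 1

noncomputable def tPoly : R[X] := ∑ a ∈ Finset.Icc 1 (q - 1), X ^ a

variable {R q} {S : Type*} [CommRing S]

@[simp] theorem uPoly_map (f : R →+* S) : (uPoly R q).map f = uPoly S q := by
  simp [uPoly, Polynomial.map_sum]

@[simp] theorem sPoly_map (f : R →+* S) : (sPoly R q).map f = sPoly S q := by
  simp [sPoly]

@[simp] theorem tPoly_map (f : R →+* S) : (tPoly R q).map f = tPoly S q := by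
  simp [tPoly, Polynomial.map_sum]

theorem tPoly_eq_X_mul : tPoly R q = X * ∑ i ∈ Finset.range (q - 1), X ^ i := by
  rw [tPoly, Finset.mul_sum, ← Finset.Ico_add_one_right_eq_Icc, Finset.sum_Ico_eq_sum_range,
    Nat.add_sub_cancel]
  simp_rw [add_comm 1, pow_succ']

theorem eval_zero_uPoly (hq : 2 ≤ q) : (uPoly R q).eval 0 = 1 := by
  simp [uPoly, eval_finsetSum, zero_geom_sum, zero_pow (show q - 1 ≠ 0 by omega),
    show q ≠ 0 by omega]

variable [Nontrivial R]

theorem degree_C_mul_X_pow_lt_geom_sum_sq (hq : 2 ≤ q) :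
    (C (q : R) * X ^ (q - 1)).degree < ((∑ i ∈ Finset.range q, (X : R[X]) ^ i) ^ 2).degree := by
  rw [degree_eq_natDegree ((monic_geom_sum_X (by omega)).pow 2).ne_zero,
    (monic_geom_sum_X (by omega)).natDegree_pow, natDegree_geom_sum_X (by omega)]
  exact (degree_C_mul_X_pow_le _ _).trans_lt (by exact_mod_cast (by omega : q - 1 < 2 * (q - 1)))

theorem uPoly_monic (hq : 2 ≤ q) : (uPoly R q).Monic :=
  ((monic_geom_sum_X (by omega)).pow 2).sub_of_left (degree_C_mul_X_pow_lt_geom_sum_sq hq)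

theorem natDegree_uPoly (hq : 2 ≤ q) : (uPoly R q).natDegree = 2 * q - 2 := by
  rw [uPoly, natDegree_eq_of_degree_eq (degree_sub_eq_left_of_degree_lt
    (degree_C_mul_X_pow_lt_geom_sum_sq hq)), (monic_geom_sum_X (by omega)).natDegree_pow,
    natDegree_geom_sum_X (by omega)]
  omega

end Ring

section Field

variable {K : Type*} [Field K] {q : ℕ}

theorem pow_mul_eval_uPoly_inv (hq : 1 ≤ q) {w : K} (hw : w ≠ 0) :
    w ^ (2 * q - 2) * (uPoly K q).eval w⁻¹ = (uPoly K q).eval w := by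
  obtain ⟨n, rfl⟩ : ∃ n, q = n + 1 := ⟨q - 1, by omega⟩
  have hΦ := pow_mul_geom_sum_inv hw n
  simp only [uPoly, eval_sub, eval_pow, eval_finsetSum, eval_X, eval_mul, eval_C,
    Nat.add_sub_cancel, show 2 * (n + 1) - 2 = 2 * n by omega, ← hΦ]
  rw [inv_pow]
  field_simp
  ring

theorem pow_mul_eval_tPoly_inv {z : K} (hz : z ≠ 0) :
    z ^ q * (tPoly K q).eval z⁻¹ = (tPoly K q).eval z := by
  obtain _ | _ | n := q
  · simp [tPoly]
  · simp [tPoly]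
  have hΦ := pow_mul_geom_sum_inv hz n
  simp only [tPoly_eq_X_mul, eval_mul, eval_X, eval_finsetSum, eval_pow,
    show n + 1 + 1 - 1 = n + 1 by omega, ← hΦ]
  field_simp
  ring

end Field

section AlgClosed

variable {K : Type*} [Field K] [IsAlgClosed K] {q : ℕ}

theorem card_roots_uPoly (hq : 2 ≤ q) : Multiset.card (uPoly K q).roots = 2 * q - 2 := by
  rw [← (IsAlgClosed.splits _).natDegree_eq_card_roots, natDegree_uPoly hq]

theorem prod_roots_uPoly (hq : 2 ≤ q) : (uPoly K q).roots.prod = 1 := by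
  have h := (IsAlgClosed.splits (uPoly K q)).coeff_zero_eq_prod_roots_of_monic (uPoly_monic hq)
  rwa [coeff_zero_eq_eval_zero, eval_zero_uPoly hq, natDegree_uPoly hq,
    (show Even (2 * q - 2) from ⟨q - 1, by omega⟩).neg_one_pow, one_mul, eq_comm] at h

theorem roots_uPoly_map_inv (hq : 2 ≤ q) : (uPoly K q).roots.map (·⁻¹) = (uPoly K q).roots :=
  roots_map_inv_of_reciprocal (uPoly_monic hq) (IsAlgClosed.splits _) (eval_zero_uPoly hq)
    fun _ hw => by rw [natDegree_uPoly hq]; exact pow_mul_eval_uPoly_inv (by omega) hw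

theorem prod_map_eval_roots_uPoly {g : K[X]} (hq : 2 ≤ q) (hg : g.Monic) :
    ((uPoly K q).roots.map g.eval).prod = (g.roots.map (uPoly K q).eval).prod := by
  rw [prod_roots_eval_comm (uPoly_monic hq) hg (IsAlgClosed.splits _) (IsAlgClosed.splits _),
    natDegree_uPoly hq, (show Even (2 * q - 2) from ⟨q - 1, by omega⟩).mul_right _ |>.neg_one_pow,
    one_mul]

theorem prod_eval_tPoly_roots_uPoly (hq : 2 ≤ q) :
    ((uPoly K q).roots.map (tPoly K q).eval).prod = (1 - q) ^ (q - 2) := by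
  have hΦ : (∑ i ∈ Finset.range (q - 1), (X : K[X]) ^ i).Monic := monic_geom_sum_X (by omega)
  have hroots : (tPoly K q).roots = 0 ::ₘ (∑ i ∈ Finset.range (q - 1), (X : K[X]) ^ i).roots := by
    rw [tPoly_eq_X_mul, roots_mul (monic_X.mul hΦ).ne_zero, roots_X, Multiset.singleton_add]
  have hval : ∀ w ∈ (∑ i ∈ Finset.range (q - 1), (X : K[X]) ^ i).roots,
      (uPoly K q).eval w = 1 - q := by
    intro w hw
    have hw0 : ∑ i ∈ Finset.range (q - 1), w ^ i = 0 := by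
      simpa [eval_finsetSum] using (mem_roots hΦ.ne_zero).mp hw
    have hpow : w ^ (q - 1) = 1 := by
      simpa [hw0, sub_eq_zero] using (geom_sum_mul w (q - 1)).symm
    have hsum : ∑ i ∈ Finset.range q, w ^ i = 1 := by
      rw [show q = q - 1 + 1 by omega, Finset.sum_range_succ, hw0, hpow, zero_add]
    simp [uPoly, eval_finsetSum, hsum, hpow]
  rw [prod_map_eval_roots_uPoly hq (tPoly_eq_X_mul (R := K) ▸ monic_X.mul hΦ), hroots,
    Multiset.map_cons, Multiset.prod_cons, eval_zero_uPoly hq, one_mul, Multiset.map_congr rfl hval,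
    Multiset.map_const', Multiset.prod_replicate, ← (IsAlgClosed.splits _).natDegree_eq_card_roots,
    natDegree_geom_sum_X (by omega), Nat.sub_sub]

theorem prod_eval_sPoly_roots_uPoly (hq : 2 ≤ q) :
    ((uPoly K q).roots.map (sPoly K q).eval).prod = ((q : K) - 1) * q ^ q := by
  set Φ : K[X] := ∑ i ∈ Finset.range q, X ^ i
  have hΦ : Φ.Monic := monic_geom_sum_X (by omega)
  have hs : sPoly K q = Φ * (X - C 1) := by rw [C_1, geom_sum_mul, sPoly]
  have hroots : (sPoly K q).roots = Φ.roots + {1} := by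
    rw [hs, roots_mul (hΦ.mul (monic_X_sub_C 1)).ne_zero, roots_X_sub_C]
  have hval : ∀ w ∈ Φ.roots, (uPoly K q).eval w = -q * w ^ (q - 1) := by
    intro w hw
    have hw0 : ∑ i ∈ Finset.range q, w ^ i = 0 := by
      simpa [Φ, eval_finsetSum] using (mem_roots hΦ.ne_zero).mp hw
    simp [uPoly, eval_finsetSum, hw0]
  have hcard : Multiset.card Φ.roots = q - 1 := by
    rw [← (IsAlgClosed.splits _).natDegree_eq_card_roots, natDegree_geom_sum_X (by omega)]
  rw [prod_map_eval_roots_uPoly hq (hs ▸ hΦ.mul (monic_X_sub_C 1)), hroots, Multiset.map_add,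
    Multiset.prod_add, Multiset.map_congr rfl hval, Multiset.prod_map_mul, Multiset.map_const',
    Multiset.prod_replicate, Multiset.prod_map_pow, Multiset.map_id',
    prod_roots_geom_sum_X (by omega), hcard]
  have hsign : (-1 : K) ^ (q - 1) * ((-1) ^ (q - 1)) ^ (q - 1) = 1 := by
    rw [← pow_succ', ← pow_mul, Nat.sub_add_cancel (by omega : 1 ≤ q), mul_comm,
      (Nat.even_mul_pred_self q).neg_one_pow]
  have h1 : (uPoly K q).eval 1 = q ^ 2 - q := by simp [uPoly, eval_finsetSum]
  rw [Multiset.map_singleton, Multiset.prod_singleton, h1, neg_pow,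
    show (q : K) ^ q = q ^ (q - 1) * q by rw [← pow_succ, Nat.sub_add_cancel (by omega)]]
  linear_combination (q ^ 2 - q) * (q : K) ^ (q - 1) * hsign

theorem prod_roots_uPoly_eval_neg (hq : 2 ≤ q) (y : K) :
    ((uPoly K q).roots.map fun z => (sPoly K q).eval z - (tPoly K q).eval z * -y).prod =
      ((uPoly K q).roots.map fun z => (sPoly K q).eval z - (tPoly K q).eval z * y).prod := by
  have hfactor : ∀ z ∈ (uPoly K q).roots,
      (sPoly K q).eval z⁻¹ - (tPoly K q).eval z⁻¹ * y =
        -(z ^ q)⁻¹ * ((sPoly K q).eval z - (tPoly K q).eval z * -y) := by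
    intro z hz
    have hz0 : z ≠ 0 := by
      rintro rfl
      simpa [eval_zero_uPoly hq] using (mem_roots (uPoly_monic hq).ne_zero).mp hz
    rw [← pow_mul_eval_tPoly_inv hz0]
    simp only [sPoly, eval_sub, eval_pow, eval_X, eval_one, inv_pow]
    field_simp
    ring
  have hunit : ((uPoly K q).roots.map fun z => -(z ^ q)⁻¹).prod = 1 := by
    rw [show (fun z : K => -(z ^ q)⁻¹) = Neg.neg ∘ fun z => (z ^ q)⁻¹ from rfl,
      ← Multiset.map_map, Multiset.prod_map_neg, Multiset.card_map,
      Multiset.prod_map_inv, Multiset.prod_map_pow, Multiset.map_id', prod_roots_uPoly hq,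
      one_pow, inv_one, mul_one, card_roots_uPoly hq, (show Even (2 * q - 2) from ⟨q - 1, by omega⟩).neg_one_pow]
  conv_rhs => rw [← roots_uPoly_map_inv hq, Multiset.map_map]
  simp only [Function.comp_def]
  rw [Multiset.map_congr rfl hfactor, Multiset.prod_map_mul, hunit, one_mul]

end AlgClosed

/-- The coefficient ring `ℤ[X]` plays the role of `ℤ[y]`. The order of the arguments is immaterial:
`Res(u, g) = Res(g, u)` because `deg u = 2q - 2` is even. -/
noncomputable def resultantPoly (q : ℕ) : ℤ[X] :=
  resultant (uPoly ℤ[X] q) (sPoly ℤ[X] q - C X * tPoly ℤ[X] q)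

theorem map_resultantPoly {K : Type*} [Field K] [IsAlgClosed K] {q : ℕ} (hq : 2 ≤ q) :
    (resultantPoly q).map (Int.castRingHom K) =
      ((uPoly K q).roots.map fun z =>
        C ((sPoly K q).eval z) - C ((tPoly K q).eval z) * X).prod := by
  set φ : ℤ[X] →+* K[X] := mapRingHom (Int.castRingHom K)
  set g : ℤ[X][X] := sPoly ℤ[X] q - C X * tPoly ℤ[X] q
  have hg : g.map φ = (sPoly K q).map C - C X * (tPoly K q).map C := by
    simp [g, φ]
  have hu : (uPoly ℤ[X] q).map φ = (uPoly K q).map C := by simp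
  have hsplit : ((uPoly K q).map C).Splits := (IsAlgClosed.splits _).map C
  have hdeg : (uPoly ℤ[X] q).natDegree = ((uPoly K q).map C).natDegree := by
    rw [uPoly_map, natDegree_uPoly hq, natDegree_uPoly hq]
  change φ (resultant (uPoly ℤ[X] q) g) = _
  rw [← resultant_map_map, hu, hdeg, resultant_eq_prod_eval _ _ _ natDegree_map_le hsplit, hg,
    ((uPoly_monic hq).map C).leadingCoeff, one_pow, one_mul,
    (IsAlgClosed.splits _).roots_map_of_injective C_injective, Multiset.map_map]
  refine congrArg _ (Multiset.map_congr rfl fun z _ => ?_)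
  rw [Function.comp_apply, eval_sub, eval_mul, eval_C, eval_map, eval_map, eval₂_hom, eval₂_hom,
    mul_comm]

section Coefficients

variable {q : ℕ} (hq : 2 ≤ q)
include hq

theorem eval_map_resultantPoly {K : Type*} [Field K] [IsAlgClosed K] (y : K) :
    ((resultantPoly q).map (Int.castRingHom K)).eval y =
      ((uPoly K q).roots.map fun z => z ^ q - 1 - y * ∑ a ∈ Finset.Icc 1 (q - 1), z ^ a).prod := by
  rw [map_resultantPoly hq, eval_multiset_prod, Multiset.map_map]
  refine congrArg _ (Multiset.map_congr rfl fun z _ => ?_)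
  simp [sPoly, tPoly, eval_finsetSum, mul_comm]

theorem natDegree_resultantPoly_le : (resultantPoly q).natDegree ≤ 2 * q - 2 := by
  rw [← natDegree_map_eq_of_injective (f := Int.castRingHom ℂ) Int.cast_injective,
    map_resultantPoly hq, ← card_roots_uPoly (K := ℂ) hq]
  exact natDegree_prod_C_sub_C_mul_X_le (uPoly ℂ q).roots _ _

theorem coeff_resultantPoly_two_mul_sub_two :
    (resultantPoly q).coeff (2 * q - 2) = (1 - q) ^ (q - 2) := by
  have h := congrArg (coeff · (Multiset.card (uPoly ℂ q).roots)) (map_resultantPoly (K := ℂ) hq)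
  rw [coeff_map, coeff_card_prod_C_sub_C_mul_X, card_roots_uPoly hq,
    (show Even (2 * q - 2) from ⟨q - 1, by omega⟩).neg_one_pow, one_mul,
    prod_eval_tPoly_roots_uPoly hq, eq_intCast] at h
  exact_mod_cast h

theorem coeff_zero_resultantPoly : (resultantPoly q).coeff 0 = (q - 1) * q ^ q := by
  have h := eval_map_resultantPoly hq (0 : ℂ)
  rw [← coeff_zero_eq_eval_zero, coeff_map, eq_intCast] at h
  simp only [zero_mul, sub_zero] at h
  have := prod_eval_sPoly_roots_uPoly (K := ℂ) hq
  simp only [sPoly, eval_sub, eval_pow, eval_X, eval_one] at this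
  exact_mod_cast h.trans this

theorem coeff_resultantPoly_of_odd {k : ℕ} (hk : Odd k) : (resultantPoly q).coeff k = 0 := by
  have h : ∀ y : ℂ, ((resultantPoly q).map (Int.castRingHom ℂ)).eval (-y) =
      ((resultantPoly q).map (Int.castRingHom ℂ)).eval y := fun y => by
    simpa only [map_resultantPoly hq, eval_multiset_prod, Multiset.map_map, Function.comp_def,
      eval_sub, eval_mul, eval_C, eval_X] using prod_roots_uPoly_eval_neg (K := ℂ) hq y
  have := coeff_eq_zero_of_odd_of_eval_neg h hk
  rwa [coeff_map, eq_intCast, Int.cast_eq_zero] at this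

end Coefficients

end WronskianResultant

open WronskianResultant in
theorem stmt16 (q : ℕ) (hq : q.Prime) (hodd : Odd q)
    (uq : Polynomial ℂ)
    (huq : uq = (∑ i ∈ Finset.range q, X ^ i) ^ 2 - C (q : ℂ) * X ^ (q - 1)) :
    ∃ R : Polynomial ℤ,
      (∀ y : ℂ,
        ((R.map (Int.castRingHom ℂ)).eval y) =
          (uq.roots.map (fun z => z ^ q - 1 - y * ∑ a ∈ Finset.Icc 1 (q - 1), z ^ a)).prod) ∧
      R.natDegree = 2 * q - 2 ∧
      (∀ k : ℕ, Odd k → R.coeff k = 0) ∧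
      R.leadingCoeff = -((q : ℤ) - 1) ^ (q - 2) ∧
      R.coeff 0 = ((q : ℤ) - 1) * (q : ℤ) ^ q := by
  have hq2 := hq.two_le
  have hlead : (1 - q : ℤ) ^ (q - 2) = -((q : ℤ) - 1) ^ (q - 2) := by
    rw [← neg_sub, (Nat.Odd.sub_even hq2 hodd even_two).neg_pow]
  have hdeg : (resultantPoly q).natDegree = 2 * q - 2 :=
    natDegree_eq_of_le_of_coeff_ne_zero (natDegree_resultantPoly_le hq2) <| by
      rw [coeff_resultantPoly_two_mul_sub_two hq2, hlead, neg_ne_zero]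
      exact pow_ne_zero _ (sub_ne_zero.mpr (by exact_mod_cast hq.one_lt.ne'))
  subst huq
  refine ⟨resultantPoly q, eval_map_resultantPoly hq2, hdeg,
    fun k hk => coeff_resultantPoly_of_odd hq2 hk, ?_, coeff_zero_resultantPoly hq2⟩
  rw [leadingCoeff, hdeg, coeff_resultantPoly_two_mul_sub_two hq2, hlead]
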